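/- arXiv:1312.6752 — 6 statements merged into one kernel-verified Lean document; each statement's English description precedes it below -/
import Mathlib

section
/- Suppose p, q, z ∈ S_θ with p, q ≠ 0 and 0 ≤ θ < π/4, and |z| ≤ C for a constant C > 0. Then 1/|q + 1/(p+z)| ≤ 1/| |q|·e^{iθ} + e^{−iθ}/(|p| + C) |, i.e. |q + 1/(p+z)| ≥ | |q| e^{iθ} + e^{−iθ}/(|p|+C) |. -/
/-!
Writing `w = ‖w‖ e^{i arg w}`, one has `‖x + y‖² = ‖x‖² + ‖y‖² + 2‖x‖‖y‖ cos (arg x - arg y)`.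
The sector `|arg w| ≤ θ` (for `θ ≤ π/2`) is the cone `‖w‖ cos θ ≤ re w`, hence closed under
addition, and it is closed under inversion. So `q` and `w = (p + z)⁻¹` lie in it, the angle between
them is at most `2θ ≤ π/2`, and `‖w‖ ≥ 1 / (‖p‖ + C)`. Since `cos 2θ ≥ 0`, the squared norm above is
minimised by pushing the arguments to `±θ` and shrinking `‖w‖` to `1 / (‖p‖ + C)`.
-/

open Real

namespace Complex

theorem abs_arg_le_iff_norm_mul_cos_le_re {θ : ℝ} (hθ0 : 0 ≤ θ) (hθπ : θ ≤ π) {w : ℂ} :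
    |w.arg| ≤ θ ↔ ‖w‖ * Real.cos θ ≤ w.re := by
  rcases eq_or_ne w 0 with rfl | hw
  · simpa using hθ0
  rw [← norm_mul_cos_arg, ← Real.cos_abs w.arg,
    mul_le_mul_iff_right₀ (norm_pos_iff.mpr hw),
    Real.strictAntiOn_cos.le_iff_ge ⟨hθ0, hθπ⟩ ⟨abs_nonneg _, abs_arg_le_pi w⟩]

theorem abs_arg_add_le {θ : ℝ} (hθ0 : 0 ≤ θ) (hθ : θ ≤ π / 2) {x y : ℂ}
    (hx : |x.arg| ≤ θ) (hy : |y.arg| ≤ θ) : |(x + y).arg| ≤ θ := by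
  have hθπ : θ ≤ π := hθ.trans (by linarith [pi_pos])
  rw [abs_arg_le_iff_norm_mul_cos_le_re hθ0 hθπ] at hx hy ⊢
  have hcos : 0 ≤ Real.cos θ := Real.cos_nonneg_of_mem_Icc ⟨by linarith [pi_pos], hθ⟩
  calc ‖x + y‖ * Real.cos θ ≤ (‖x‖ + ‖y‖) * Real.cos θ := by gcongr; exact norm_add_le x y
    _ ≤ (x + y).re := by rw [add_re]; linarith

theorem norm_ofReal_mul_exp_add_sq (r s a b : ℝ) :
    ‖(r : ℂ) * exp (a * I) + s * exp (b * I)‖ ^ 2 =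
      r ^ 2 + s ^ 2 + 2 * r * s * Real.cos (a - b) := by
  rw [Complex.sq_norm, normSq_apply]
  simp only [add_re, add_im, re_ofReal_mul, im_ofReal_mul, exp_ofReal_mul_I_re,
    exp_ofReal_mul_I_im, Real.cos_sub]
  linear_combination r ^ 2 * Real.sin_sq_add_cos_sq a + s ^ 2 * Real.sin_sq_add_cos_sq b

theorem norm_add_sq_eq (x y : ℂ) :
    ‖x + y‖ ^ 2 = ‖x‖ ^ 2 + ‖y‖ ^ 2 + 2 * ‖x‖ * ‖y‖ * Real.cos (x.arg - y.arg) := by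
  conv_lhs => rw [← norm_mul_exp_arg_mul_I x, ← norm_mul_exp_arg_mul_I y]
  exact norm_ofReal_mul_exp_add_sq _ _ _ _

theorem norm_mul_exp_add_le_norm_add {θ : ℝ} (hθ : θ ≤ π / 4) {x y : ℂ}
    (hx : |x.arg| ≤ θ) (hy : |y.arg| ≤ θ) {m : ℝ} (hm0 : 0 ≤ m) (hm : m ≤ ‖y‖) :
    ‖(‖x‖ : ℂ) * exp (θ * I) + m * exp (-θ * I)‖ ≤ ‖x + y‖ := by
  have hθ0 : 0 ≤ θ := (abs_nonneg _).trans hx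
  have hcos : 0 ≤ Real.cos (2 * θ) :=
    Real.cos_nonneg_of_mem_Icc ⟨by linarith [pi_pos], by linarith⟩
  have hcos_arg : Real.cos (2 * θ) ≤ Real.cos (x.arg - y.arg) := by
    rw [← Real.cos_abs (x.arg - y.arg)]
    apply Real.cos_le_cos_of_nonneg_of_le_pi (abs_nonneg _) (by linarith [pi_pos])
    calc |x.arg - y.arg| ≤ |x.arg| + |y.arg| := abs_sub _ _
      _ ≤ 2 * θ := by linarith
  have hsq := norm_ofReal_mul_exp_add_sq ‖x‖ m θ (-θ)
  push_cast at hsq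
  rw [← sq_le_sq₀ (norm_nonneg _) (norm_nonneg _), hsq, norm_add_sq_eq, sub_neg_eq_add, ← two_mul]
  gcongr

end Complex

theorem key_lemma_general (θ : ℝ) (hθ : θ < π / 4)
    (p q z : ℂ)
    (hp : p = 0 ∨ |p.arg| ≤ θ) (hq : q = 0 ∨ |q.arg| ≤ θ) (hz : z = 0 ∨ |z.arg| ≤ θ)
    (hp0 : p ≠ 0)
    (C : ℝ) (hzC : ‖z‖ ≤ C) :
    ‖((‖q‖ : ℂ) * Complex.exp (θ * Complex.I)
        + Complex.exp (-θ * Complex.I) / ((‖p‖ + C : ℝ) : ℂ))‖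
      ≤ ‖q + 1 / (p + z)‖ := by
  have hp' : |p.arg| ≤ θ := hp.resolve_left hp0
  have hθ0 : 0 ≤ θ := (abs_nonneg _).trans hp'
  have sector {w : ℂ} (hw : w = 0 ∨ |w.arg| ≤ θ) : |w.arg| ≤ θ := by
    rcases hw with rfl | hw
    · simpa using hθ0
    · exact hw
  have hpz : |(p + z).arg| ≤ θ := Complex.abs_arg_add_le hθ0 (by linarith) hp' (sector hz)
  have hpz0 : 0 < ‖p + z‖ := by
    have hp_re : 0 < p.re :=
      (Complex.abs_arg_lt_pi_div_two_iff.mp (by linarith)).resolve_right hp0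
    have hz_re : 0 ≤ z.re := Complex.abs_arg_le_pi_div_two_iff.mp (by linarith [sector hz])
    refine norm_pos_iff.mpr fun h => ?_
    have := congrArg Complex.re h
    rw [Complex.add_re, Complex.zero_re] at this
    linarith
  have hnorm : ‖p + z‖ ≤ ‖p‖ + C := (norm_add_le p z).trans (by linarith)
  rw [div_eq_mul_inv, mul_comm (Complex.exp _), ← Complex.ofReal_inv, one_div]
  refine Complex.norm_mul_exp_add_le_norm_add hθ.le (sector hq) (by rwa [Complex.abs_arg_inv])
    (inv_nonneg.mpr (by linarith [norm_nonneg p, norm_nonneg z])) ?_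
  rw [norm_inv]
  gcongr

theorem key_lemma (θ : ℝ) (hθ0 : 0 ≤ θ) (hθ : θ < π / 4)
    (p q z : ℂ)
    (hp : p = 0 ∨ |p.arg| ≤ θ) (hq : q = 0 ∨ |q.arg| ≤ θ) (hz : z = 0 ∨ |z.arg| ≤ θ)
    (hp0 : p ≠ 0) (hq0 : q ≠ 0)
    (C : ℝ) (hC : 0 < C) (hzC : ‖z‖ ≤ C) :
    ‖((‖q‖ : ℂ) * Complex.exp (θ * Complex.I)
        + Complex.exp (-θ * Complex.I) / ((‖p‖ + C : ℝ) : ℂ))‖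
      ≤ ‖q + 1 / (p + z)‖ :=
  key_lemma_general θ hθ p q z hp hq hz hp0 C hzC
end

section
/- Suppose p, q, z ∈ S_θ with p, q ≠ 0, 0 ≤ θ < π/4, and C is a positive constant with C² ≥ |p|/(|q| cos 2θ). If |z| ≤ C then |1/(q + 1/(p+z))| ≤ C. -/
open Real

/-!
Put `w = p + z`, so that `1 / (q + 1 / w) = w / (q * w + 1)`. The arguments of two points of `S_θ`
add up to at most `2θ < π / 2` in absolute value, so `Re (q * p) ≥ ‖q‖ ‖p‖ cos 2θ`, and likewise for
`q * z`. With `k = ‖q‖ cos 2θ > 0` and `s = ‖p‖ + ‖z‖ ≥ ‖w‖` this gives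
`‖q * w + 1‖ ≥ Re (q * w) + 1 ≥ k s + 1`. The hypothesis on `C` says `s ≤ C (1 + C k)`, hence
`s (1 - C k) ≤ C (1 - (C k) ^ 2) ≤ C`, that is, `‖w‖ ≤ s ≤ C (k s + 1) ≤ C ‖q * w + 1‖`.
-/

def argSector (θ : ℝ) : Set ℂ := {w | w = 0 ∨ |w.arg| ≤ θ}

lemma Complex.re_mul_eq_norm_mul_norm_mul_cos_add (u v : ℂ) :
    (u * v).re = ‖u‖ * ‖v‖ * Real.cos (u.arg + v.arg) := by
  rw [Complex.mul_re, ← Complex.norm_mul_cos_arg u, ← Complex.norm_mul_cos_arg v,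
    ← Complex.norm_mul_sin_arg u, ← Complex.norm_mul_sin_arg v, Real.cos_add]
  ring

lemma norm_mul_norm_mul_cos_le_re_mul {θ : ℝ} (hθ : θ ≤ π / 2) {u v : ℂ}
    (hu : u ∈ argSector θ) (hv : v ∈ argSector θ) :
    ‖u‖ * ‖v‖ * cos (2 * θ) ≤ (u * v).re := by
  rcases hu with rfl | hu
  · simp
  rcases hv with rfl | hv
  · simp
  have hsum : |u.arg + v.arg| ≤ 2 * θ := by
    linarith [abs_add_le u.arg v.arg]
  rw [Complex.re_mul_eq_norm_mul_norm_mul_cos_add, ← cos_abs (u.arg + v.arg)]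
  gcongr
  exact cos_le_cos_of_nonneg_of_le_pi (abs_nonneg _) (by linarith) hsum

lemma le_mul_mul_add_one {C k s : ℝ} (hC : 0 ≤ C) (hs : 0 ≤ s) (hsC : s ≤ C ^ 2 * k + C) :
    s ≤ C * (k * s + 1) := by
  rcases le_or_gt 1 (C * k) with hx | hx
  · nlinarith
  · nlinarith [mul_nonneg hC (sq_nonneg (C * k))]

theorem key_lemma_one_general (θ : ℝ) (hθ : θ < π / 4)
    (p q z : ℂ)
    (hp : p = 0 ∨ |p.arg| ≤ θ) (hq : q = 0 ∨ |q.arg| ≤ θ) (hz : z = 0 ∨ |z.arg| ≤ θ)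
    (hp0 : p ≠ 0) (hq0 : q ≠ 0)
    (C : ℝ)
    (hC2 : ‖p‖ / (‖q‖ * Real.cos (2 * θ)) ≤ C ^ 2)
    (hzC : ‖z‖ ≤ C) :
    ‖1 / (q + 1 / (p + z))‖ ≤ C := by
  have hθ0 : 0 ≤ θ := (abs_nonneg _).trans (hp.resolve_left hp0)
  have hθ2 : θ ≤ π / 2 := by linarith [pi_pos]
  set k := ‖q‖ * cos (2 * θ)
  set s := ‖p‖ + ‖z‖
  have hk : 0 < k := mul_pos (norm_pos_iff.2 hq0) (cos_pos_of_mem_Ioo ⟨by linarith, by linarith⟩)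
  have hs : 0 < s := add_pos_of_pos_of_nonneg (norm_pos_iff.2 hp0) (norm_nonneg z)
  have hC : 0 ≤ C := (norm_nonneg z).trans hzC
  have hre : k * s ≤ (q * (p + z)).re :=
    calc k * s = ‖q‖ * ‖p‖ * cos (2 * θ) + ‖q‖ * ‖z‖ * cos (2 * θ) := by ring
      _ ≤ (q * p).re + (q * z).re := add_le_add
          (norm_mul_norm_mul_cos_le_re_mul hθ2 hq hp) (norm_mul_norm_mul_cos_le_re_mul hθ2 hq hz)
      _ = (q * (p + z)).re := by rw [mul_add, Complex.add_re]
  have hden : k * s + 1 ≤ ‖q * (p + z) + 1‖ := by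
    have := Complex.re_le_norm (q * (p + z) + 1)
    rw [Complex.add_re, Complex.one_re] at this
    linarith
  have hw : p + z ≠ 0 := by
    rintro hw
    rw [hw, mul_zero, Complex.zero_re] at hre
    linarith [mul_pos hk hs]
  have hsC : s ≤ C * (k * s + 1) := by
    refine le_mul_mul_add_one hC hs.le ?_
    have := (div_le_iff₀ hk).1 hC2
    linarith
  rw [show 1 / (q + 1 / (p + z)) = (p + z) / (q * (p + z) + 1) by field_simp,
    norm_div, div_le_iff₀ (by linarith [mul_pos hk hs])]
  calc ‖p + z‖ ≤ s := norm_add_le p z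
    _ ≤ C * (k * s + 1) := hsC
    _ ≤ C * ‖q * (p + z) + 1‖ := by gcongr

theorem key_lemma_one (θ : ℝ) (hθ0 : 0 ≤ θ) (hθ : θ < π / 4)
    (p q z : ℂ)
    (hp : p = 0 ∨ |p.arg| ≤ θ) (hq : q = 0 ∨ |q.arg| ≤ θ) (hz : z = 0 ∨ |z.arg| ≤ θ)
    (hp0 : p ≠ 0) (hq0 : q ≠ 0)
    (C : ℝ) (hC : 0 < C)
    (hC2 : ‖p‖ / (‖q‖ * Real.cos (2 * θ)) ≤ C ^ 2)
    (hzC : ‖z‖ ≤ C) :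
    ‖1 / (q + 1 / (p + z))‖ ≤ C :=
  key_lemma_one_general θ hθ p q z hp hq hz hp0 hq0 C hC2 hzC
end

section
/- Suppose p, q, z ∈ S_θ with p, q ≠ 0, 0 ≤ θ < π/4, and C is a positive constant with C² ≥ |p|/(|q| cos 2θ). If |z| ≤ C then the inequality |q + 1/(p+z)| ≥ cos(2θ)|q| + 1/(|p| + C) holds. -/
/-!
Put `w = (p + z)⁻¹`. The sector `S_θ` is a convex cone for `θ ≤ π/2` and is closed under
inversion, so `w ∈ S_θ`; as the arguments of `q` and `w` differ by at most `2θ`,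
`Re (q w̄) ≥ cos 2θ ‖q‖ ‖w‖`. Hence `‖q + w‖ ‖w‖ ≥ Re ((q + w) w̄) ≥ (cos 2θ ‖q‖ + ‖w‖) ‖w‖`,
and `‖w‖ ≥ 1 / (‖p‖ + C)` because `‖p + z‖ ≤ ‖p‖ + C`.
-/

open Real Complex ComplexConjugate

def sector (θ : ℝ) : Set ℂ := {w | w = 0 ∨ |w.arg| ≤ θ}

section sector

variable {θ : ℝ} {a b : ℂ}

lemma abs_arg_le_of_mem_sector (hθ : 0 ≤ θ) (ha : a ∈ sector θ) : |a.arg| ≤ θ := by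
  rcases ha with rfl | ha
  · simpa using hθ
  · exact ha

lemma mem_sector_iff_cos_mul_norm_le_re (hθ0 : 0 ≤ θ) (hθ : θ ≤ π) :
    a ∈ sector θ ↔ Real.cos θ * ‖a‖ ≤ a.re := by
  rcases eq_or_ne a 0 with rfl | ha
  · simp [sector]
  have hnorm : 0 < ‖a‖ := norm_pos_iff.mpr ha
  rw [← norm_mul_cos_arg, mul_comm, mul_le_mul_iff_of_pos_left hnorm, ← Real.cos_abs a.arg,
    strictAntiOn_cos.le_iff_ge ⟨hθ0, hθ⟩ ⟨abs_nonneg _, abs_arg_le_pi a⟩]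
  simp [sector, ha]

lemma add_mem_sector (hθ0 : 0 ≤ θ) (hθ : θ ≤ π / 2) (ha : a ∈ sector θ) (hb : b ∈ sector θ) :
    a + b ∈ sector θ := by
  have hθπ : θ ≤ π := by linarith [pi_pos]
  rw [mem_sector_iff_cos_mul_norm_le_re hθ0 hθπ] at ha hb ⊢
  have hcos : 0 ≤ Real.cos θ := cos_nonneg_of_mem_Icc ⟨by linarith, hθ⟩
  calc Real.cos θ * ‖a + b‖ ≤ Real.cos θ * (‖a‖ + ‖b‖) := by gcongr; exact norm_add_le a b
    _ ≤ (a + b).re := by rw [add_re]; linarith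

lemma inv_mem_sector (ha : a ∈ sector θ) : a⁻¹ ∈ sector θ := by
  rcases ha with rfl | ha
  · simp [sector]
  · exact Or.inr (by rwa [abs_arg_inv])

lemma re_pos_of_mem_sector (hθ0 : 0 ≤ θ) (hθ : θ < π / 2) (ha : a ∈ sector θ) (ha0 : a ≠ 0) :
    0 < a.re := by
  rw [mem_sector_iff_cos_mul_norm_le_re hθ0 (by linarith [pi_pos])] at ha
  have hcos : 0 < Real.cos θ := cos_pos_of_mem_Ioo ⟨by linarith, hθ⟩
  exact (mul_pos hcos (norm_pos_iff.mpr ha0)).trans_le ha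

lemma re_nonneg_of_mem_sector (hθ0 : 0 ≤ θ) (hθ : θ ≤ π / 2) (ha : a ∈ sector θ) :
    0 ≤ a.re := by
  rw [mem_sector_iff_cos_mul_norm_le_re hθ0 (by linarith [pi_pos])] at ha
  have hcos : 0 ≤ Real.cos θ := cos_nonneg_of_mem_Icc ⟨by linarith, hθ⟩
  exact (mul_nonneg hcos (norm_nonneg a)).trans ha

end sector

lemma re_mul_conj_eq_norm_mul_norm_mul_cos_arg_sub (a b : ℂ) :
    (a * conj b).re = ‖a‖ * ‖b‖ * Real.cos (a.arg - b.arg) := by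
  rw [Real.cos_sub, mul_re, conj_re, conj_im, ← norm_mul_cos_arg a, ← norm_mul_sin_arg a,
    ← norm_mul_cos_arg b, ← norm_mul_sin_arg b]
  ring

lemma cos_two_mul_mul_norm_mul_norm_le_re_mul_conj {θ : ℝ} {a b : ℂ} (hθ : θ ≤ π / 2)
    (ha : |a.arg| ≤ θ) (hb : |b.arg| ≤ θ) :
    Real.cos (2 * θ) * (‖a‖ * ‖b‖) ≤ (a * conj b).re := by
  have harg : |a.arg - b.arg| ≤ 2 * θ := by
    linarith [abs_sub a.arg b.arg]
  have hcos : Real.cos (2 * θ) ≤ Real.cos (a.arg - b.arg) := by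
    rw [← Real.cos_abs (a.arg - b.arg)]
    exact cos_le_cos_of_nonneg_of_le_pi (abs_nonneg _) (by linarith) harg
  rw [re_mul_conj_eq_norm_mul_norm_mul_cos_arg_sub, mul_comm (‖a‖ * ‖b‖)]
  gcongr

lemma mul_norm_add_norm_le_norm_add_of_le_re_mul_conj {c : ℝ} {a b : ℂ} (hb : b ≠ 0)
    (h : c * (‖a‖ * ‖b‖) ≤ (a * conj b).re) :
    c * ‖a‖ + ‖b‖ ≤ ‖a + b‖ := by
  have hnorm : 0 < ‖b‖ := norm_pos_iff.mpr hb
  have hre : (b * conj b).re = ‖b‖ * ‖b‖ := by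
    rw [mul_conj, ofReal_re, normSq_eq_norm_sq, sq]
  refine le_of_mul_le_mul_right ?_ hnorm
  calc (c * ‖a‖ + ‖b‖) * ‖b‖ = c * (‖a‖ * ‖b‖) + (b * conj b).re := by rw [hre]; ring
    _ ≤ ((a + b) * conj b).re := by rw [add_mul, add_re]; linarith
    _ ≤ ‖(a + b) * conj b‖ := re_le_norm _
    _ = ‖a + b‖ * ‖b‖ := by rw [norm_mul, norm_conj]

theorem denominator_lower_bound_general (θ : ℝ) (hθ0 : 0 ≤ θ) (hθ : θ < π / 4)
    (p q z : ℂ)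
    (hp : p = 0 ∨ |p.arg| ≤ θ) (hq : q = 0 ∨ |q.arg| ≤ θ) (hz : z = 0 ∨ |z.arg| ≤ θ)
    (hp0 : p ≠ 0)
    (C : ℝ)
    (hzC : ‖z‖ ≤ C) :
    Real.cos (2 * θ) * ‖q‖ + 1 / (‖p‖ + C)
      ≤ ‖q + 1 / (p + z)‖ := by
  have hθ2 : θ < π / 2 := by linarith [pi_pos]
  have hpz : p + z ∈ sector θ := add_mem_sector hθ0 hθ2.le hp hz
  have hpz0 : p + z ≠ 0 := by
    refine ne_of_apply_ne re (ne_of_gt ?_)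
    rw [add_re, zero_re]
    linarith [re_pos_of_mem_sector hθ0 hθ2 hp hp0, re_nonneg_of_mem_sector hθ0 hθ2.le hz]
  have hw : (p + z)⁻¹ ∈ sector θ := inv_mem_sector hpz
  have hnorm : 1 / (‖p‖ + C) ≤ ‖(p + z)⁻¹‖ := by
    rw [norm_inv, ← one_div]
    exact one_div_le_one_div_of_le (norm_pos_iff.mpr hpz0)
      ((norm_add_le p z).trans (by linarith))
  have hqw := cos_two_mul_mul_norm_mul_norm_le_re_mul_conj hθ2.le
    (abs_arg_le_of_mem_sector hθ0 hq) (abs_arg_le_of_mem_sector hθ0 hw)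
  rw [one_div (p + z)]
  linarith [mul_norm_add_norm_le_norm_add_of_le_re_mul_conj (inv_ne_zero hpz0) hqw]

theorem denominator_lower_bound (θ : ℝ) (hθ0 : 0 ≤ θ) (hθ : θ < π / 4)
    (p q z : ℂ)
    (hp : p = 0 ∨ |p.arg| ≤ θ) (hq : q = 0 ∨ |q.arg| ≤ θ) (hz : z = 0 ∨ |z.arg| ≤ θ)
    (hp0 : p ≠ 0) (hq0 : q ≠ 0)
    (C : ℝ) (hC : 0 < C)
    (hC2 : ‖p‖ / (‖q‖ * Real.cos (2 * θ)) ≤ C ^ 2)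
    (hzC : ‖z‖ ≤ C) :
    Real.cos (2 * θ) * ‖q‖ + 1 / (‖p‖ + C)
      ≤ ‖q + 1 / (p + z)‖ :=
  denominator_lower_bound_general θ hθ0 hθ p q z hp hq hz hp0 C hzC
end

section
/- Let p = q = t e^{iπ/4} and z = t^{−1/3} e^{iπ/4} with 0 < t ≤ 1/2. Then |q + 1/(p+z)|² < t^{2/3} = 1/|z|², so 1/|q + 1/(p+z)| > |z|. -/
/-!
Write `ω = e^{iπ/4}` and `t = b³`, so that `p = q = b³ω` and `z = b⁻¹ω`. Since `ω² = i` and `|ω| = 1`,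
`q + 1/(p+z) = ω⁻¹ (1/(b³ + b⁻¹) + b³ i)`, whence `|q + 1/(p+z)|² = b⁶ + b²/(1 + b⁴)²`. With `x = b⁴`
the claim `|q + 1/(p+z)|² < b² = 1/|z|²` becomes `x + 1/(1+x)² < 1`, i.e. `x² + x < 1`, which holds
because `x < 1/2` when `t ≤ 1/2`.
-/

open Real

namespace Complex

theorem norm_eq_one_of_sq_eq_I {ω : ℂ} (h : ω ^ 2 = I) : ‖ω‖ = 1 := by
  have h' := congrArg norm h
  rw [norm_pow, norm_I] at h'
  exact (pow_eq_one_iff_of_nonneg (norm_nonneg ω) two_ne_zero).1 h'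

theorem sq_norm_ofReal_mul_add_one_div_add {ω : ℂ} (hω : ω ^ 2 = I) (a s : ℝ) :
    ‖(a : ℂ) * ω + 1 / ((a : ℂ) * ω + (s : ℂ) * ω)‖ ^ 2 = a ^ 2 + (1 / (a + s)) ^ 2 := by
  have hrot : (a : ℂ) * ω + 1 / ((a : ℂ) * ω + (s : ℂ) * ω)
      = ω⁻¹ * (((1 / (a + s) : ℝ) : ℂ) + a * I) := by
    rw [← add_mul, ← hω]
    push_cast
    field_simp
    ring
  rw [hrot, norm_mul, mul_pow, norm_inv, norm_eq_one_of_sq_eq_I hω, Complex.sq_norm,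
    normSq_add_mul_I]
  ring

theorem exp_pi_div_four_mul_I_sq : exp ((π / 4 : ℝ) * I) ^ 2 = I := by
  rw [← exp_nat_mul]
  convert exp_pi_div_two_mul_I using 2
  push_cast
  ring

end Complex

theorem add_one_div_one_add_sq_lt_one {x : ℝ} (hx0 : 0 < x) (hx : x ^ 2 + x < 1) :
    x + (1 / (1 + x)) ^ 2 < 1 := by
  have h : (1 / (1 + x)) ^ 2 < 1 - x := by
    rw [div_pow, one_pow, div_lt_iff₀ (by positivity)]
    nlinarith
  linarith

theorem cube_sq_add_one_div_sq_lt_sq {b : ℝ} (hb : 0 < b) (hb4 : (b ^ 4) ^ 2 + b ^ 4 < 1) :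
    (b ^ 3) ^ 2 + (1 / (b ^ 3 + b⁻¹)) ^ 2 < b ^ 2 := by
  have hfactor : (b ^ 3) ^ 2 + (1 / (b ^ 3 + b⁻¹)) ^ 2
      = b ^ 2 * (b ^ 4 + (1 / (1 + b ^ 4)) ^ 2) := by
    field_simp
    ring
  rw [hfactor]
  exact mul_lt_of_lt_one_right (by positivity) (add_one_div_one_add_sq_lt_one (by positivity) hb4)

theorem counterexample_at_pi_div_four (t : ℝ) (ht0 : 0 < t) (ht : t ≤ 1 / 2) :
    let p : ℂ := (t : ℂ) * Complex.exp ((π / 4 : ℝ) * Complex.I)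
    let q : ℂ := (t : ℂ) * Complex.exp ((π / 4 : ℝ) * Complex.I)
    let z : ℂ := ((t ^ (-(1 / 3) : ℝ) : ℝ) : ℂ) * Complex.exp ((π / 4 : ℝ) * Complex.I)
    ‖q + 1 / (p + z)‖ ^ 2 < t ^ ((2 : ℝ) / 3) ∧
      t ^ ((2 : ℝ) / 3) = 1 / ‖z‖ ^ 2 ∧
      ‖z‖ < 1 / ‖q + 1 / (p + z)‖ := by
  obtain ⟨b, hb, rfl⟩ : ∃ b : ℝ, 0 < b ∧ b ^ 3 = t :=
    ⟨t ^ ((3 : ℕ)⁻¹ : ℝ), by positivity, rpow_inv_natCast_pow ht0.le three_ne_zero⟩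
  intro p q z
  have hb4 : (b ^ 4) ^ 2 + b ^ 4 < 1 := by
    have hb1 : b < 1 := by nlinarith [sq_nonneg (b - 1)]
    have hx : b ^ 4 < 1 / 2 := by nlinarith [pow_pos hb 3]
    nlinarith [pow_pos hb 4]
  have h23 : (b ^ 3) ^ ((2 : ℝ) / 3) = b ^ 2 := by
    rw [← rpow_natCast, ← rpow_mul hb.le]
    norm_num
  have hneg : (b ^ 3) ^ (-(1 / 3) : ℝ) = b⁻¹ := by
    rw [← rpow_natCast, ← rpow_mul hb.le]
    norm_num [rpow_neg_one]
  have hz : ‖z‖ = b⁻¹ := by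
    simp only [z, hneg, norm_mul, Complex.norm_exp_ofReal_mul_I, Complex.norm_real, norm_inv,
      Real.norm_of_nonneg hb.le, mul_one]
  have hw : ‖q + 1 / (p + z)‖ ^ 2 = (b ^ 3) ^ 2 + (1 / (b ^ 3 + b⁻¹)) ^ 2 := by
    rw [← hneg]
    exact Complex.sq_norm_ofReal_mul_add_one_div_add Complex.exp_pi_div_four_mul_I_sq _ _
  have hlt : ‖q + 1 / (p + z)‖ ^ 2 < b ^ 2 := hw ▸ cube_sq_add_one_div_sq_lt_sq hb hb4
  refine ⟨h23 ▸ hlt, by rw [h23, hz]; field_simp, ?_⟩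
  have hw_pos : 0 < ‖q + 1 / (p + z)‖ :=
    lt_of_pow_lt_pow_left₀ 2 (norm_nonneg _) (by rw [hw, zero_pow two_ne_zero]; positivity)
  rw [hz, lt_one_div (inv_pos.2 hb) hw_pos, one_div b⁻¹, inv_inv]
  exact lt_of_pow_lt_pow_left₀ 2 hb.le hlt
end

section
/- Suppose p, q, z are complex numbers with Re p > 0, Re q > 0, Re z > 0, and C > 0 satisfies C² ≥ 1/(4 · Re(q) · Re(1/p)). If |z − C| ≤ C then |1/(q + 1/(p+z)) − C| ≤ C. -/
/-!
The closed disk `‖w - C‖ ≤ C` is `normSq w ≤ 2 C Re w`, so inversion maps it onto the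
half-plane `Re w ≥ 1 / (2C)`; it therefore suffices to show `Re (q + 1 / (p + z)) ≥ 1 / (2C)`.
The function `f w = normSq w / Re w` (the reciprocal of `Re (1 / w)`) is convex and positively
homogeneous on the right half-plane, hence subadditive, and `f z ≤ 2C` on the disk. This
gives `Re (1 / (p + z)) ≥ 1 / (f p + 2C)`, and the hypothesis on `C` says exactly
`Re q ≥ f p / (4C²)`.
-/

open Complex

namespace Complex

theorem norm_sub_ofReal_le_self_iff {C : ℝ} (hC : 0 ≤ C) {w : ℂ} :
    ‖w - C‖ ≤ C ↔ normSq w ≤ 2 * C * w.re := by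
  rw [← sq_le_sq₀ (norm_nonneg _) hC, Complex.sq_norm]
  simp only [normSq_apply, sub_re, sub_im, ofReal_re, ofReal_im, sub_zero]
  constructor <;> intro h <;> nlinarith

theorem norm_inv_sub_ofReal_le_self_iff {C : ℝ} (hC : 0 ≤ C) {w : ℂ} (hw : w ≠ 0) :
    ‖w⁻¹ - C‖ ≤ C ↔ 1 ≤ 2 * C * w.re := by
  rw [norm_sub_ofReal_le_self_iff hC, normSq_inv, inv_re, inv_eq_one_div, ← mul_div_assoc,
    div_le_div_iff_of_pos_right (normSq_pos.2 hw)]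

theorem normSq_div_re_le_of_norm_sub_ofReal_le_self {C : ℝ} (hC : 0 ≤ C) {w : ℂ}
    (hw : 0 < w.re) (h : ‖w - C‖ ≤ C) : normSq w / w.re ≤ 2 * C :=
  (div_le_iff₀ hw).2 ((norm_sub_ofReal_le_self_iff hC).1 h)

/-- The imaginary parts contribute `(Re p Im z - Im p Re z)²` to the difference. -/
theorem normSq_add_div_re_le {p z : ℂ} (hp : 0 < p.re) (hz : 0 < z.re) :
    normSq (p + z) / (p + z).re ≤ normSq p / p.re + normSq z / z.re := by
  have hpz : 0 < (p + z).re := add_pos hp hz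
  rw [div_add_div _ _ hp.ne' hz.ne', div_le_div_iff₀ hpz (mul_pos hp hz)]
  simp only [normSq_apply, add_re, add_im]
  nlinarith [sq_nonneg (p.re * z.im - p.im * z.re)]

end Complex

theorem one_le_two_mul_mul_add_one_div_add {C ρ Q : ℝ} (hC : 0 < C) (hρ : 0 ≤ ρ)
    (hQ : ρ ≤ 4 * C ^ 2 * Q) : 1 ≤ 2 * C * (Q + 1 / (ρ + 2 * C)) := by
  have hρC : 0 < ρ + 2 * C := by positivity
  rw [mul_add, mul_one_div, ← sub_le_iff_le_add', le_div_iff₀ hρC]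
  nlinarith [sq_nonneg ρ]

theorem two_step_disk_lemma (p q z : ℂ)
    (hp : 0 < p.re) (hq : 0 < q.re) (hz : 0 < z.re)
    (C : ℝ) (hC : 0 < C)
    (hC2 : 1 / (4 * q.re * (1 / p).re) ≤ C ^ 2)
    (hzC : ‖z - (C : ℂ)‖ ≤ C) :
    ‖1 / (q + 1 / (p + z)) - (C : ℂ)‖ ≤ C := by
  set ρ := normSq p / p.re
  have hρ : 0 < ρ := div_pos (normSq_pos.2 (ne_zero_of_re_pos hp)) hp
  have hp_inv_re : (1 / p).re = 1 / ρ := by rw [one_div, inv_re, one_div_div]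
  have hqρ : ρ ≤ 4 * C ^ 2 * q.re := by
    rw [hp_inv_re, mul_one_div, one_div_div, div_le_iff₀ (by positivity)] at hC2
    linarith
  have hpz : 0 < (p + z).re := add_pos hp hz
  have hf : normSq (p + z) / (p + z).re ≤ ρ + 2 * C :=
    (normSq_add_div_re_le hp hz).trans
      (add_le_add_right (normSq_div_re_le_of_norm_sub_ofReal_le_self hC.le hz hzC) ρ)
  have hre : q.re + 1 / (ρ + 2 * C) ≤ (q + 1 / (p + z)).re := by
    rw [add_re, one_div (p + z), inv_re, ← one_div_div (normSq (p + z))]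
    gcongr
    exact div_pos (normSq_pos.2 (ne_zero_of_re_pos hpz)) hpz
  have hW : 1 ≤ 2 * C * (q + 1 / (p + z)).re :=
    (one_le_two_mul_mul_add_one_div_add hC hρ.le hqρ).trans (by gcongr)
  have hW_re : 0 < (q + 1 / (p + z)).re :=
    pos_of_mul_pos_right (one_pos.trans_le hW) (by positivity)
  rw [one_div (q + _), norm_inv_sub_ofReal_le_self_iff hC.le (ne_zero_of_re_pos hW_re)]
  exact hW
end

section
/- Let p_1,…,p_n, q_1,…,q_n, z be complex numbers with positive real part, and let C > 0 satisfy C² ≥ (1/4) · sup_{1≤k≤n} 1/(Re(q_k) · Re(1/p_k)). If |z − C| ≤ C then the finite continued fraction 1/(q_1 + 1/(p_1 + 1/(q_2 + ··· + 1/(q_n + 1/(p_n + z))···))) lies in the closed disk of radius C centered at C. -/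
/-!
Write `D` for the closed disk `‖w - C‖ ≤ C`. For `ζ ≠ 0`, `ζ⁻¹ ∈ D` exactly when `2C · Re ζ ≥ 1`,
so it suffices that each step `w ↦ 1 / (q + 1 / (p + w))` maps `D` into itself.
For `w ∈ D`, `Re (p + w)⁻¹ ≥ r / (1 + 2Cr)` with `r = Re p⁻¹`, while the hypothesis on `C`
says `2C · Re q ≥ 1 / (2Cr)`; as `1/s + s/(1+s) ≥ 1` for `s > 0`, this gives
`2C · Re (q + (p + w)⁻¹) ≥ 1`.
-/

/-- The finite continued fraction `F_0 = z`,
`F_k = 1/(q_{n-k+1} + 1/(p_{n-k+1} + F_{k-1}))`. -/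
noncomputable def contFrac (n : ℕ) (q p : ℕ → ℂ) (z : ℂ) : ℕ → ℂ :=
  Nat.rec z (fun k F => 1 / (q (n - k) + 1 / (p (n - k) + F)))

namespace Complex

variable {C : ℝ}

lemma re_nonneg_of_norm_sub_ofReal_le {w : ℂ} (hw : ‖w - C‖ ≤ C) : 0 ≤ w.re := by
  have := abs_re_le_norm (w - C)
  rw [sub_re, ofReal_re, abs_le] at this
  linarith

lemma norm_inv_sub_ofReal_le {ζ : ℂ} (hC : 0 ≤ C) (hζ : 1 ≤ 2 * C * ζ.re) :
    ‖ζ⁻¹ - C‖ ≤ C := by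
  have hζ0 : ζ ≠ 0 := by rintro rfl; norm_num at hζ
  have hsq : ‖1 - C * ζ‖ ^ 2 ≤ (C * ‖ζ‖) ^ 2 := by
    rw [mul_pow, Complex.sq_norm, Complex.sq_norm, normSq_sub, normSq_mul, normSq_ofReal, normSq_one]
    simp only [one_mul, ofReal_re, ofReal_im, mul_re, conj_re]
    nlinarith
  have hnum : ‖1 - C * ζ‖ ≤ C * ‖ζ‖ := le_of_pow_le_pow_left₀ two_ne_zero (by positivity) hsq
  calc ‖ζ⁻¹ - C‖ = ‖1 - C * ζ‖ / ‖ζ‖ := by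
        rw [← norm_div, sub_div, one_div, mul_div_cancel_right₀ _ hζ0]
    _ ≤ C * ‖ζ‖ / ‖ζ‖ := by gcongr
    _ = C := mul_div_cancel_right₀ _ (norm_ne_zero_iff.mpr hζ0)

lemma div_le_re_inv_add {p w : ℂ} (hp : 0 < p.re) (hC : 0 ≤ C) (hw : ‖w - C‖ ≤ C) :
    p.re / (normSq p + 2 * C * p.re) ≤ (p + w)⁻¹.re := by
  have hpw : 0 < (p + w).re := by
    rw [add_re]; linarith [re_nonneg_of_norm_sub_ofReal_le hw]
  have hp2 := normSq_pos.mpr (ne_zero_of_re_pos hp)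
  rw [inv_re, div_le_div_iff₀ (by positivity) (normSq_pos.mpr (ne_zero_of_re_pos hpw))]
  -- both summands are nonnegative since `‖w - C‖ ≤ C`
  have hdiff : (p + w).re * (normSq p + 2 * C * p.re) - p.re * normSq (p + w)
      = (C * normSq p - ((starRingEnd ℂ) p ^ 2 * (w - C)).re)
        + p.re * (C ^ 2 - normSq (w - C)) := by
    simp only [normSq_apply, add_re, add_im, sub_re, sub_im, mul_re, mul_im, pow_two,
      conj_re, conj_im, ofReal_re, ofReal_im]
    ring
  have h1 : ((starRingEnd ℂ) p ^ 2 * (w - C)).re ≤ C * normSq p :=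
    calc _ ≤ ‖(starRingEnd ℂ) p ^ 2 * (w - C)‖ := re_le_norm _
      _ = normSq p * ‖w - C‖ := by rw [norm_mul, norm_pow, norm_conj, Complex.sq_norm]
      _ ≤ normSq p * C := by gcongr
      _ = C * normSq p := mul_comm _ _
  have h2 : normSq (w - C) ≤ C ^ 2 := by
    rw [← Complex.sq_norm]; gcongr
  nlinarith [mul_nonneg hp.le (sub_nonneg.2 h2)]

end Complex

lemma one_le_add_div_one_add {x s : ℝ} (hs : 0 < s) (h : 1 ≤ x * s) : 1 ≤ x + s / (1 + s) := by
  rw [← sub_nonneg]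
  have hx : 1 / s ≤ x := by rw [div_le_iff₀ hs]; exact h
  have : 1 / s + s / (1 + s) - 1 = 1 / (s * (1 + s)) := by field_simp; ring
  have : 0 ≤ 1 / (s * (1 + s)) := by positivity
  linarith

open Complex in
lemma norm_continuedFraction_step_sub_ofReal_le {C : ℝ} {p q w : ℂ} (hC : 0 < C)
    (hp : 0 < p.re) (hq : 0 < q.re) (hpq : 1 / 4 * (1 / (q.re * (1 / p).re)) ≤ C ^ 2)
    (hw : ‖w - C‖ ≤ C) :
    ‖1 / (q + 1 / (p + w)) - C‖ ≤ C := by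
  simp only [one_div] at hpq ⊢
  apply norm_inv_sub_ofReal_le hC.le
  have hp2 := normSq_pos.mpr (ne_zero_of_re_pos hp)
  have hr : 0 < p⁻¹.re := by rw [inv_re]; positivity
  have hqr : 1 ≤ 2 * C * q.re * (2 * C * p⁻¹.re) := by
    rw [← mul_inv, inv_le_iff_one_le_mul₀ (by positivity)] at hpq
    linarith
  have hlow : p⁻¹.re / (1 + 2 * C * p⁻¹.re) ≤ (p + w)⁻¹.re := by
    convert div_le_re_inv_add hp hC.le hw using 1
    rw [inv_re]
    field_simp
  calc (1 : ℝ) ≤ 2 * C * q.re + 2 * C * p⁻¹.re / (1 + 2 * C * p⁻¹.re) :=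
        one_le_add_div_one_add (by positivity) hqr
    _ ≤ 2 * C * (q + (p + w)⁻¹).re := by
        rw [add_re, mul_add, mul_div_assoc]; gcongr

theorem value_region_shifted_circle_general (n : ℕ) (q p : ℕ → ℂ) (z : ℂ)
    (hq : ∀ k, 1 ≤ k → k ≤ n → 0 < (q k).re)
    (hp : ∀ k, 1 ≤ k → k ≤ n → 0 < (p k).re)
    (C : ℝ) (hC : 0 < C)
    (hC2 : ∀ k, 1 ≤ k → k ≤ n → 1 / 4 * (1 / ((q k).re * (1 / p k).re)) ≤ C ^ 2)
    (hzC : ‖z - (C : ℂ)‖ ≤ C) :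
    ‖contFrac n q p z n - (C : ℂ)‖ ≤ C := by
  suffices h : ∀ k ≤ n, ‖contFrac n q p z k - C‖ ≤ C from h n le_rfl
  intro k
  induction k with
  | zero => exact fun _ => hzC
  | succ k ih =>
    intro hk
    have hlo : 1 ≤ n - k := by omega
    exact norm_continuedFraction_step_sub_ofReal_le hC (hp _ hlo (n.sub_le k))
      (hq _ hlo (n.sub_le k)) (hC2 _ hlo (n.sub_le k)) (ih (by omega))

theorem value_region_shifted_circle (n : ℕ) (q p : ℕ → ℂ) (z : ℂ)
    (hq : ∀ k, 1 ≤ k → k ≤ n → 0 < (q k).re)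
    (hp : ∀ k, 1 ≤ k → k ≤ n → 0 < (p k).re)
    (hz : 0 < z.re)
    (C : ℝ) (hC : 0 < C)
    (hC2 : ∀ k, 1 ≤ k → k ≤ n → 1 / 4 * (1 / ((q k).re * (1 / p k).re)) ≤ C ^ 2)
    (hzC : ‖z - (C : ℂ)‖ ≤ C) :
    ‖contFrac n q p z n - (C : ℂ)‖ ≤ C :=
  value_region_shifted_circle_general n q p z hq hp C hC hC2 hzC
end
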